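/- arXiv:1709.07999 — 2 statements merged into one kernel-verified Lean document; each statement's English description precedes it below -/
import Mathlib

section
/- For all 0 ≤ k ≤ n, W_{m,r,q}(n,k) = q^{C(k,2)} ∑_{c_0 + c_1 + ... + c_k = n-k} ∏_{j=0}^{k} (m[j]_q + r)^{c_j}, where the sum is over all (k+1)-tuples of non-negative integers summing to n-k (i.e., W_{m,r,q}(n,k) equals q^{C(k,2)} times the complete homogeneous symmetric polynomial of degree n-k in the variables m[0]_q + r, ..., m[k]_q + r). -/
/-!
Write `x j = m[j]_q + r` and `h_k(d) = ∑_{c_0 + ⋯ + c_{k-1} = d} ∏_j x_j ^ {c_j}`. Splitting off the last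
exponent gives `h_{k+1}(d+1) = h_k(d+1) + x_k h_{k+1}(d)`, and `C(k+1,2) = C(k,2) + k`, so
`q^{C(k,2)} h_{k+1}(n-k)` satisfies the defining recurrence of `W(n,k)`; a double induction on
`n - k` and `k` concludes.
-/

open Finset

noncomputable def qint (q : ℂ) (n : ℕ) : ℂ := (q ^ n - 1) / (q - 1)

/-- (q,r)-Whitney numbers of the first kind, via the triangular recurrence
`w(n+1,k) = q^{-n} (w(n,k-1) - (m[n]_q + r) w(n,k))`, with `w(0,0)=1` and
`w(n,k)=0` for `k>n` (the `k<0` values are zero, absorbed in the `k=0` case). -/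
noncomputable def qw (q m r : ℂ) : ℕ → ℕ → ℂ
  | 0, 0 => 1
  | 0, _ + 1 => 0
  | n + 1, 0 => q ^ (-(n : ℤ)) * (0 - (m * qint q n + r) * qw q m r n 0)
  | n + 1, k + 1 => q ^ (-(n : ℤ)) * (qw q m r n k - (m * qint q n + r) * qw q m r n (k + 1))

/-- (q,r)-Whitney numbers of the second kind, via
`W(n+1,k) = q^{k-1} W(n,k-1) + (m[k]_q + r) W(n,k)`, with `W(0,0)=1`. -/
noncomputable def qW (q m r : ℂ) : ℕ → ℕ → ℂ
  | 0, 0 => 1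
  | 0, _ + 1 => 0
  | n + 1, 0 => (m * qint q 0 + r) * qW q m r n 0
  | n + 1, k + 1 => q ^ k * qW q m r n k + (m * qint q (k + 1) + r) * qW q m r n (k + 1)

theorem Finset.Nat.sum_antidiagonalTuple_succ_snoc {M : Type*} [AddCommMonoid M] (k n : ℕ)
    (f : (Fin (k + 1) → ℕ) → M) :
    ∑ c ∈ Nat.antidiagonalTuple (k + 1) n, f c =
      ∑ p ∈ antidiagonal n, ∑ c ∈ Nat.antidiagonalTuple k p.1, f (Fin.snoc c p.2) := by
  rw [sum_sigma']
  refine sum_nbij' (fun c => ⟨(∑ j : Fin k, c j.castSucc, c (Fin.last k)), Fin.init c⟩)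
    (fun pc => Fin.snoc pc.2 pc.1.2) ?_ ?_ ?_ ?_ ?_
  all_goals simp only [mem_sigma, HasAntidiagonal.mem_antidiagonal, Nat.mem_antidiagonalTuple]
  · intro c hc
    simp_all [Fin.sum_univ_castSucc, Fin.init]
  · rintro ⟨⟨a, b⟩, c⟩ ⟨rfl, hc⟩
    simp_all [Fin.sum_univ_castSucc]
  · simp
  · rintro ⟨⟨a, b⟩, c⟩ ⟨rfl, hc⟩
    simp_all
  · simp

theorem Nat.succ_choose_two (k : ℕ) : (k + 1).choose 2 = k.choose 2 + k := by
  rw [Nat.choose_succ_succ, Nat.choose_one_right, add_comm]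

section CompleteHomogeneous

variable {R : Type*} [CommSemiring R]

noncomputable def completeHomogeneous (x : ℕ → R) (k d : ℕ) : R :=
  ∑ c ∈ Nat.antidiagonalTuple k d, ∏ j : Fin k, x j ^ c j

@[simp]
theorem completeHomogeneous_zero_right (x : ℕ → R) (k : ℕ) : completeHomogeneous x k 0 = 1 := by
  simp [completeHomogeneous, Nat.antidiagonalTuple_zero_right]

@[simp]
theorem completeHomogeneous_zero_succ (x : ℕ → R) (d : ℕ) :
    completeHomogeneous x 0 (d + 1) = 0 := by
  simp [completeHomogeneous, Nat.antidiagonalTuple_zero_succ]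

theorem completeHomogeneous_succ (x : ℕ → R) (k d : ℕ) :
    completeHomogeneous x (k + 1) d =
      ∑ p ∈ antidiagonal d, completeHomogeneous x k p.1 * x k ^ p.2 := by
  rw [completeHomogeneous, Nat.sum_antidiagonalTuple_succ_snoc]
  refine sum_congr rfl fun p _ => ?_
  rw [completeHomogeneous, sum_mul]
  refine sum_congr rfl fun c _ => ?_
  simp [Fin.prod_univ_castSucc]

theorem completeHomogeneous_succ_succ (x : ℕ → R) (k d : ℕ) :
    completeHomogeneous x (k + 1) (d + 1) =
      completeHomogeneous x k (d + 1) + x k * completeHomogeneous x (k + 1) d := by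
  rw [completeHomogeneous_succ, Nat.sum_antidiagonal_succ', completeHomogeneous_succ, mul_sum]
  simp only [pow_zero, mul_one, pow_succ]
  congr 1
  exact sum_congr rfl fun p _ => by ring

end CompleteHomogeneous

section Whitney

variable (q m r : ℂ)

theorem qW_eq_zero_of_lt {n k : ℕ} (h : n < k) : qW q m r n k = 0 := by
  induction n generalizing k with
  | zero =>
    obtain ⟨k, rfl⟩ := Nat.exists_eq_succ_of_ne_zero h.ne'
    rfl
  | succ n ih =>
    obtain ⟨k, rfl⟩ := Nat.exists_eq_succ_of_ne_zero (Nat.ne_zero_of_lt h)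
    rw [qW, ih (by omega), ih (by omega), mul_zero, mul_zero, add_zero]

theorem qW_self (n : ℕ) : qW q m r n n = q ^ n.choose 2 := by
  induction n with
  | zero => rfl
  | succ n ih =>
    rw [qW, ih, qW_eq_zero_of_lt q m r n.lt_succ_self, Nat.succ_choose_two, pow_add]
    ring

theorem qW_add_eq_completeHomogeneous (d k : ℕ) :
    qW q m r (k + d) k =
      q ^ k.choose 2 * completeHomogeneous (fun j => m * qint q j + r) (k + 1) d := by
  induction d generalizing k with
  | zero => simp [qW_self]
  | succ d ihd =>
    induction k with
    | zero =>
      rw [zero_add, qW, ← zero_add d, ihd, completeHomogeneous_succ_succ,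
        completeHomogeneous_zero_succ]
      simp
    | succ k ihk =>
      rw [show k + 1 + (d + 1) = k + (d + 1) + 1 by omega, qW, ihk,
        show k + (d + 1) = k + 1 + d by omega, ihd,
        completeHomogeneous_succ_succ _ (k + 1), Nat.succ_choose_two, pow_add]
      ring

end Whitney

theorem stmt9_general (q m r : ℂ) (n k : ℕ) (hkn : k ≤ n) :
    qW q m r n k =
      q ^ k.choose 2 *
        ∑ c ∈ Finset.Nat.antidiagonalTuple (k + 1) (n - k),
          ∏ j : Fin (k + 1), (m * qint q j + r) ^ c j := by
  obtain ⟨d, rfl⟩ := Nat.exists_eq_add_of_le hkn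
  rw [qW_add_eq_completeHomogeneous, Nat.add_sub_cancel_left, completeHomogeneous]

theorem stmt9 (q m r : ℂ) (hq0 : q ≠ 0) (hq1 : q ≠ 1) (n k : ℕ) (hkn : k ≤ n) :
    qW q m r n k =
      q ^ k.choose 2 *
        ∑ c ∈ Finset.Nat.antidiagonalTuple (k + 1) (n - k),
          ∏ j : Fin (k + 1), (m * qint q j + r) ^ c j :=
  stmt9_general q m r n k hkn
end

section
/- For all non-negative integers p, j, n with n ≤ p + j, the convolution identity w_{m,r,q}(p+j, n) = q^{-pj} ∑_{k=0}^{n} w_{m,r,q}(p,k) w_{m̄,r̄,q}(j, n-k) holds, where m̄ = m q^p and r̄ = m[p]_q + r. -/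
open Finset

/-! The row generating polynomial `∑ₖ w(n,k) xᵏ` factors as `∏_{i<n} q^{-i} (x - (m[i]_q + r))`.
Since `m[p+i]_q + r = m̄[i]_q + r̄`, the last `j` factors of the product for `p + j` are `q^{-p}`
times the factors of the polynomial of row `j` with parameters `(m̄, r̄)`; comparing coefficients
in this factorisation is the convolution identity. -/

open Polynomial

theorem qint_add (q : ℂ) (p i : ℕ) : qint q (p + i) = qint q p + q ^ p * qint q i := by
  rcases eq_or_ne q 1 with rfl | hq1
  · -- at `q = 1` every `qint` is the junk value `0 / 0 = 0`
    simp [qint]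
  · have : q - 1 ≠ 0 := sub_ne_zero.mpr hq1
    simp only [qint]
    field_simp
    ring

noncomputable def qwPoly (q m r : ℂ) (n : ℕ) : ℂ[X] :=
  ∏ i ∈ range n, C (q ^ (-(i : ℤ))) * (X - C (m * qint q i + r))

theorem qwPoly_succ (q m r : ℂ) (n : ℕ) :
    qwPoly q m r (n + 1) =
      C (q ^ (-(n : ℤ))) * (qwPoly q m r n * X - C (m * qint q n + r) * qwPoly q m r n) := by
  rw [qwPoly, prod_range_succ, ← qwPoly]
  ring

theorem coeff_qwPoly (q m r : ℂ) (n k : ℕ) : (qwPoly q m r n).coeff k = qw q m r n k := by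
  induction n generalizing k with
  | zero => cases k <;> simp [qwPoly, qw, coeff_one]
  | succ n ih =>
    cases k with
    | zero => rw [qwPoly_succ, coeff_C_mul, coeff_sub, coeff_mul_X_zero, coeff_C_mul, ih]; rfl
    | succ k => rw [qwPoly_succ, coeff_C_mul, coeff_sub, coeff_mul_X, coeff_C_mul, ih, ih]; rfl

theorem qwPoly_add (q m r : ℂ) (p j : ℕ) :
    qwPoly q m r (p + j) =
      C (q ^ (-(p * j : ℤ))) * (qwPoly q m r p * qwPoly q (m * q ^ p) (m * qint q p + r) j) := by
  have hshift (i : ℕ) : C (q ^ (-((p + i : ℕ) : ℤ))) * (X - C (m * qint q (p + i) + r)) =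
      C (q ^ (-(p : ℤ))) *
        (C (q ^ (-(i : ℤ))) * (X - C (m * q ^ p * qint q i + (m * qint q p + r)))) := by
    simp only [qint_add, zpow_neg, zpow_natCast, pow_add, mul_inv, C_mul, C_add]
    ring
  have hpow : C (q ^ (-(p : ℤ))) ^ j = C (q ^ (-(p * j : ℤ))) := by
    rw [← C_pow, ← zpow_natCast, ← zpow_mul, neg_mul]
  rw [qwPoly, prod_range_add, ← qwPoly]
  simp_rw [hshift]
  rw [prod_mul_distrib, prod_const, card_range, hpow]
  unfold qwPoly
  ring

theorem stmt15_general (q m r : ℂ) (p j n : ℕ) :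
    qw q m r (p + j) n =
      q ^ (-(p * j : ℤ)) * ∑ k ∈ Finset.range (n + 1),
        qw q m r p k * qw q (m * q ^ p) (m * qint q p + r) j (n - k) := by
  rw [← coeff_qwPoly, qwPoly_add, coeff_C_mul, coeff_mul,
    Nat.sum_antidiagonal_eq_sum_range_succ_mk]
  simp only [coeff_qwPoly]

theorem stmt15 (q m r : ℂ) (hq0 : q ≠ 0) (hq1 : q ≠ 1) (p j n : ℕ) (hn : n ≤ p + j) :
    qw q m r (p + j) n =
      q ^ (-(p * j : ℤ)) * ∑ k ∈ Finset.range (n + 1),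
        qw q m r p k * qw q (m * q ^ p) (m * qint q p + r) j (n - k) :=
  stmt15_general q m r p j n
end
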